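/- Let n ≥ 2 and k be positive integers with k ≥ n-1. Then the set of all n-element subsets of {1,...,2n+k} that contain the element 1 is a geodetic set of the Kneser graph K(2n+k,n) of cardinality C(2n+k-1, n-1). -/

import Mathlib

/-- The Kneser graph `K(m, n)`: vertices are the `n`-element subsets of an `m`-element
ground set, with edges between disjoint sets. -/
def KneserGraph (m n : ℕ) : SimpleGraph {s : Finset (Fin m) // s.card = n} where
  Adj u v := Disjoint u.1 v.1 ∧ u ≠ v
  symm := ⟨fun u v ⟨h, hne⟩ => ⟨h.symm, hne.symm⟩⟩
  loopless := ⟨fun u ⟨_, h⟩ => h rfl⟩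

/-- The geodetic interval `I[u,v]`: all vertices lying on some shortest `u,v`-path. -/
def geodInterval {V : Type*} (G : SimpleGraph V) (u v : V) : Set V :=
  {w | G.dist u w + G.dist w v = G.dist u v}

/-- `I[W] = ⋃_{u,v ∈ W} I[u,v]`. -/
def geodIntervalSet {V : Type*} (G : SimpleGraph V) (W : Set V) : Set V :=
  ⋃ (u ∈ W) (v ∈ W), geodInterval G u v

/-- `W` is a geodetic set if `I[W] = V(G)`. -/
def IsGeodeticSet {V : Type*} (G : SimpleGraph V) (W : Set V) : Prop :=
  geodIntervalSet G W = Set.univ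

/-- `W` is geodetically convex if `I[W] = W`. -/
def IsGConvex {V : Type*} (G : SimpleGraph V) (W : Set V) : Prop :=
  geodIntervalSet G W = W

/-- The geodetic hull `H[W]`: the smallest g-convex set containing `W`. -/
def geodHull {V : Type*} (G : SimpleGraph V) (W : Set V) : Set V :=
  ⋂₀ {C | IsGConvex G C ∧ W ⊆ C}

/-- `W` is a geodetic hull set if `H[W] = V(G)`. -/
def IsGeodHullSet {V : Type*} (G : SimpleGraph V) (W : Set V) : Prop :=
  geodHull G W = Set.univ

/-- The geodetic number: minimum cardinality of a geodetic set. -/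
noncomputable def geodeticNumber {V : Type*} (G : SimpleGraph V) : ℕ :=
  sInf {m | ∃ W : Set V, IsGeodeticSet G W ∧ W.ncard = m}

/-- The geodetic hull number: minimum cardinality of a geodetic hull set. -/
noncomputable def geodHullNumber {V : Type*} (G : SimpleGraph V) : ℕ :=
  sInf {m | ∃ W : Set V, IsGeodHullSet G W ∧ W.ncard = m}

/-- The function `H(n,k)` from the paper. -/
def Hfun (n k : ℕ) : ℕ := if n % k ≤ 1 then n % k + k - 2 else n % k - 2

/-- `p = (⌈(n-1)/(2k)⌉ - 1)·k + 1`, computed in `ℤ`. -/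
def pInt (n k : ℕ) : ℤ := (⌈((n : ℚ) - 1) / (2 * k)⌉ - 1) * k + 1

/-! Every `n`-set `w` avoiding the element `a` is the middle vertex of a path `u – w – v` of
length two between stars at `a`: choose an `(n+1)`-set `s ∋ a` disjoint from `w` (possible as
`m - n ≥ n + 1`) and delete two different elements of `s \ {a}` (possible as `n ≥ 2`). The two
resulting `n`-sets meet in `a`, so they are at distance two, and `w` is on a geodesic between
them. -/

open Finset

section Geodetic

variable {V : Type*} {G : SimpleGraph V}

lemma self_mem_geodInterval (w : V) : w ∈ geodInterval G w w := by
  simp [geodInterval]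

lemma mem_geodInterval_of_adj_of_adj {u v w : V} (huv : u ≠ v) (hnadj : ¬G.Adj u v)
    (huw : G.Adj u w) (hwv : G.Adj w v) : w ∈ geodInterval G u v := by
  have hdist : G.dist u v = 2 :=
    le_antisymm (SimpleGraph.dist_le (.cons huw (.cons hwv .nil)))
      ((huw.reachable.trans hwv.reachable).one_lt_dist_of_ne_of_not_adj huv hnadj)
  simp [geodInterval, SimpleGraph.dist_eq_one_iff_adj.2 huw,
    SimpleGraph.dist_eq_one_iff_adj.2 hwv, hdist]

lemma isGeodeticSet_of_forall_notMem {W : Set V}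
    (h : ∀ w ∉ W, ∃ u ∈ W, ∃ v ∈ W, u ≠ v ∧ ¬G.Adj u v ∧ G.Adj u w ∧ G.Adj w v) :
    IsGeodeticSet G W := by
  refine Set.eq_univ_of_forall fun w => ?_
  simp only [geodIntervalSet, Set.mem_iUnion]
  by_cases hw : w ∈ W
  · exact ⟨w, hw, w, hw, self_mem_geodInterval w⟩
  · obtain ⟨u, hu, v, hv, huv, hnadj, huw, hwv⟩ := h w hw
    exact ⟨u, hu, v, hv, mem_geodInterval_of_adj_of_adj huv hnadj huw hwv⟩

end Geodetic

lemma ncard_setOf_mem_of_card_eq {α : Type*} [Fintype α] {n : ℕ} (hn : 1 ≤ n) (a : α) :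
    {v : {s : Finset α // s.card = n} | a ∈ v.1}.ncard = (Fintype.card α - 1).choose (n - 1) := by
  classical
  have himage : Subtype.val '' {v : {s : Finset α // s.card = n} | a ∈ v.1} =
      ↑((univ.powersetCard n).filter ({a} ⊆ ·)) := by
    ext s
    simp [and_comm]
  rw [← Set.ncard_image_of_injective _ Subtype.val_injective, himage, Set.ncard_coe_finset,
    card_filter_powersetCard_subset _ _ _ (subset_univ _) (by simpa using hn), card_univ,
    card_singleton]

namespace KneserGraph

variable {m n : ℕ}

lemma not_adj_of_mem_of_mem {a : Fin m} {u v : {s : Finset (Fin m) // s.card = n}}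
    (hu : a ∈ u.1) (hv : a ∈ v.1) : ¬(KneserGraph m n).Adj u v :=
  fun h => disjoint_left.1 h.1 hu hv

lemma exists_adj_adj_of_notMem (hn : 2 ≤ n) (hm : 2 * n + 1 ≤ m) {a : Fin m}
    {w : {s : Finset (Fin m) // s.card = n}} (hw : a ∉ w.1) :
    ∃ u v : {s : Finset (Fin m) // s.card = n}, a ∈ u.1 ∧ a ∈ v.1 ∧ u ≠ v ∧
      (KneserGraph m n).Adj u w ∧ (KneserGraph m n).Adj w v := by
  have hcompl : n + 1 ≤ (w.1ᶜ).card := by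
    rw [card_compl, w.2, Fintype.card_fin]
    omega
  obtain ⟨s, has, hsw, hs⟩ := exists_subsuperset_card_eq
    (singleton_subset_iff.2 (mem_compl.2 hw)) (by simp) hcompl
  rw [singleton_subset_iff] at has
  obtain ⟨x, hx, y, hy, hxy⟩ := one_lt_card.1 (by rw [card_erase_of_mem has]; omega :
    1 < (s.erase a).card)
  have hcard : ∀ z ∈ s.erase a, (s.erase z).card = n := fun z hz => by
    rw [card_erase_of_mem (mem_of_mem_erase hz), hs, Nat.add_sub_cancel]
  have hmem : ∀ z ∈ s.erase a, a ∈ s.erase z := fun z hz =>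
    mem_erase.2 ⟨(ne_of_mem_erase hz).symm, has⟩
  have hdisj : ∀ z, Disjoint (s.erase z) w.1 := fun z =>
    subset_compl_iff_disjoint_right.1 ((erase_subset z s).trans hsw)
  refine ⟨⟨s.erase x, hcard x hx⟩, ⟨s.erase y, hcard y hy⟩, hmem x hx, hmem y hy, ?_,
    ⟨hdisj x, fun h => hw (h ▸ hmem x hx)⟩, ⟨(hdisj y).symm, fun h => hw (h ▸ hmem y hy)⟩⟩
  intro h
  have hyx : y ∈ s.erase x := mem_erase.2 ⟨hxy.symm, mem_of_mem_erase hy⟩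
  rw [show s.erase x = s.erase y from congrArg Subtype.val h] at hyx
  exact notMem_erase y s hyx

lemma isGeodeticSet_setOf_mem (hn : 2 ≤ n) (hm : 2 * n + 1 ≤ m) (a : Fin m) :
    IsGeodeticSet (KneserGraph m n) {v : {s : Finset (Fin m) // s.card = n} | a ∈ v.1} :=
  isGeodeticSet_of_forall_notMem fun _ hw => by
    obtain ⟨u, v, hu, hv, huv, huw, hwv⟩ := exists_adj_adj_of_notMem hn hm hw
    exact ⟨u, hu, v, hv, huv, not_adj_of_mem_of_mem hu hv, huw, hwv⟩

end KneserGraph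

theorem star_isGeodeticSet_of_diam_two
    (n k : ℕ) (hn : 2 ≤ n) (hk : 0 < k) :
    IsGeodeticSet (KneserGraph (2 * n + k) n)
      {v : {s : Finset (Fin (2 * n + k)) // s.card = n} | (⟨0, by omega⟩ : Fin (2 * n + k)) ∈ v.1} ∧
    ({v : {s : Finset (Fin (2 * n + k)) // s.card = n} | (⟨0, by omega⟩ : Fin (2 * n + k)) ∈ v.1} : Set {s : Finset (Fin (2 * n + k)) // s.card = n}).ncard =
      (2 * n + k - 1).choose (n - 1) := by
  refine ⟨KneserGraph.isGeodeticSet_setOf_mem hn (by omega) ⟨0, by omega⟩, ?_⟩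
  simpa using ncard_setOf_mem_of_card_eq (n := n) (by omega) (⟨0, by omega⟩ : Fin (2 * n + k))
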